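/- Let ξ_n and ν_n be sequences of positive real numbers with ξ_n → ∞ and ν_n → 0 as n → ∞. If lim_{n→∞} ξ_n ν_n = γ (where γ may be 0, a positive real, or ∞), then lim_{n→∞} Φ(−√ξ_n (1 − ν_n)) / Φ(−√ξ_n) = e^γ, where Φ is the standard normal cumulative distribution function (with the convention that the limit is ∞ when γ = ∞). -/

import Mathlib

/-!
Comparing `e^{-s²/2}` on `(-∞, -x]` with the derivatives of `e^{-s²/2} / x` and of
`-s e^{-s²/2} / (1 + s²)` gives the Mills ratio bounds `x / (1 + x²) ≤ R(x) ≤ 1 / x`, so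
`x R(x) → 1`. Writing `Φ(-x) = φ(x) R(x)`, the ratio is
`Φ(-b) / Φ(-a) = e^{(a² - b²)/2} R(b) / R(a)`. For `a = √ξ_n`, `b = a (1 - ν_n)` the exponent
is `ξ_n ν_n - ξ_n ν_n² / 2 → γ`, and `R(b) / R(a) → 1` because `b / a → 1`.
-/

open MeasureTheory Real Set Filter

/-- The standard normal cumulative distribution function. -/
noncomputable def Phi (t : ℝ) : ℝ :=
  ∫ x in Iic t, Real.exp (-x ^ 2 / 2) / Real.sqrt (2 * Real.pi)

open scoped Topology

lemma integrable_exp_neg_sq_div_two : Integrable fun s : ℝ => exp (-s ^ 2 / 2) := by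
  simpa [neg_div, div_eq_inv_mul] using integrable_exp_neg_mul_sq (b := 1 / 2) (by norm_num)

lemma integrable_neg_mul_exp_neg_sq_div_two :
    Integrable fun s : ℝ => -s * exp (-s ^ 2 / 2) := by
  simpa [neg_div, div_eq_inv_mul] using
    (integrable_mul_exp_neg_mul_sq (b := 1 / 2) (by norm_num)).neg

lemma tendsto_exp_neg_sq_div_two_atBot :
    Tendsto (fun t : ℝ => exp (-t ^ 2 / 2)) atBot (𝓝 0) := by
  have hsq : Tendsto (fun t : ℝ => t ^ 2) atBot atTop := by
    simpa [Function.comp_def] using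
      (tendsto_pow_atTop (α := ℝ) two_ne_zero).comp tendsto_neg_atBot_atTop
  exact tendsto_exp_atBot.comp
    ((tendsto_neg_atTop_atBot.comp hsq).atBot_div_const (two_pos : (0 : ℝ) < 2))

lemma hasDerivAt_exp_neg_sq_div_two (t : ℝ) :
    HasDerivAt (fun t : ℝ => exp (-t ^ 2 / 2)) (-t * exp (-t ^ 2 / 2)) t := by
  convert ((hasDerivAt_pow 2 t).fun_neg.div_const 2).exp using 1
  ring

lemma integral_Iic_neg_mul_exp_neg_sq_div_two (a : ℝ) :
    ∫ s in Iic a, -s * exp (-s ^ 2 / 2) = exp (-a ^ 2 / 2) := by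
  rw [integral_Iic_of_hasDerivAt_of_tendsto' (fun s _ => hasDerivAt_exp_neg_sq_div_two s)
    integrable_neg_mul_exp_neg_sq_div_two.integrableOn tendsto_exp_neg_sq_div_two_atBot,
    sub_zero]

lemma integral_Iic_exp_neg_sq_div_two_le {x : ℝ} (hx : 0 < x) :
    ∫ s in Iic (-x), exp (-s ^ 2 / 2) ≤ exp (-x ^ 2 / 2) / x := by
  have hmono : ∫ s in Iic (-x), exp (-s ^ 2 / 2)
      ≤ ∫ s in Iic (-x), x⁻¹ * (-s * exp (-s ^ 2 / 2)) := by
    refine setIntegral_mono_on integrable_exp_neg_sq_div_two.integrableOn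
      (integrable_neg_mul_exp_neg_sq_div_two.integrableOn.const_mul x⁻¹)
      measurableSet_Iic fun s hs => ?_
    have : 1 ≤ x⁻¹ * -s := by rw [← div_eq_inv_mul, le_div_iff₀ hx]; linarith [mem_Iic.mp hs]
    nlinarith [exp_pos (-s ^ 2 / 2)]
  rwa [integral_const_mul, integral_Iic_neg_mul_exp_neg_sq_div_two, neg_sq, ← div_eq_inv_mul]
    at hmono

lemma hasDerivAt_neg_div_one_add_sq_mul_exp (t : ℝ) :
    HasDerivAt (fun t : ℝ => -t / (1 + t ^ 2) * exp (-t ^ 2 / 2))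
      ((1 - 2 / (1 + t ^ 2) ^ 2) * exp (-t ^ 2 / 2)) t := by
  refine (((hasDerivAt_id' t).fun_neg.fun_div ((hasDerivAt_pow 2 t).const_add 1)
    (by positivity)).fun_mul (hasDerivAt_exp_neg_sq_div_two t)).congr_deriv ?_
  field_simp
  ring

lemma le_integral_Iic_exp_neg_sq_div_two (x : ℝ) :
    x / (1 + x ^ 2) * exp (-x ^ 2 / 2) ≤ ∫ s in Iic (-x), exp (-s ^ 2 / 2) := by
  have hbound : ∀ s : ℝ, 0 ≤ 2 / (1 + s ^ 2) ^ 2 ∧ 2 / (1 + s ^ 2) ^ 2 ≤ 2 := fun s =>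
    ⟨by positivity, div_le_self two_pos.le (one_le_pow₀ (by nlinarith))⟩
  have hint : Integrable fun s : ℝ => (1 - 2 / (1 + s ^ 2) ^ 2) * exp (-s ^ 2 / 2) := by
    refine integrable_exp_neg_sq_div_two.mono' (by fun_prop) (Eventually.of_forall fun s => ?_)
    rw [norm_mul, norm_of_nonneg (exp_pos _).le, Real.norm_eq_abs]
    refine mul_le_of_le_one_left (exp_pos _).le (abs_le.mpr ⟨?_, ?_⟩) <;> linarith [hbound s]
  have hlim : Tendsto (fun t : ℝ => -t / (1 + t ^ 2) * exp (-t ^ 2 / 2)) atBot (𝓝 0) := by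
    refine squeeze_zero_norm (fun t => ?_) tendsto_exp_neg_sq_div_two_atBot
    rw [norm_mul, norm_of_nonneg (exp_pos _).le, norm_div, norm_neg, Real.norm_eq_abs,
      Real.norm_eq_abs, abs_of_pos (by positivity : (0 : ℝ) < 1 + t ^ 2)]
    refine mul_le_of_le_one_left (exp_pos _).le ((div_le_one (by positivity)).mpr ?_)
    nlinarith [abs_nonneg t, sq_abs t]
  have hFTC := integral_Iic_of_hasDerivAt_of_tendsto' (a := -x)
    (fun s _ => hasDerivAt_neg_div_one_add_sq_mul_exp s) hint.integrableOn hlim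
  rw [sub_zero, neg_neg, neg_sq] at hFTC
  rw [← hFTC]
  refine setIntegral_mono_on hint.integrableOn integrable_exp_neg_sq_div_two.integrableOn
    measurableSet_Iic fun s _ => ?_
  nlinarith [hbound s, exp_pos (-s ^ 2 / 2)]

/-- The Mills ratio `R(x) = Φ(-x) / φ(x)`, with the factor `√(2π)` cancelled. -/
noncomputable def millsRatio (x : ℝ) : ℝ :=
  exp (x ^ 2 / 2) * ∫ s in Iic (-x), exp (-s ^ 2 / 2)

lemma Phi_neg_eq (x : ℝ) : Phi (-x) = exp (-x ^ 2 / 2) * millsRatio x / √(2 * π) := by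
  rw [Phi, integral_div, millsRatio, ← mul_assoc, ← exp_add, neg_div, neg_add_cancel,
    exp_zero, one_mul]

lemma millsRatio_le {x : ℝ} (hx : 0 < x) : millsRatio x ≤ x⁻¹ :=
  calc millsRatio x ≤ exp (x ^ 2 / 2) * (exp (-x ^ 2 / 2) / x) :=
        mul_le_mul_of_nonneg_left (integral_Iic_exp_neg_sq_div_two_le hx) (exp_pos _).le
    _ = x⁻¹ := by rw [mul_div_assoc', ← exp_add, neg_div, add_neg_cancel, exp_zero, one_div]

lemma le_millsRatio (x : ℝ) : x / (1 + x ^ 2) ≤ millsRatio x :=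
  calc x / (1 + x ^ 2) = exp (x ^ 2 / 2) * (x / (1 + x ^ 2) * exp (-x ^ 2 / 2)) := by
        rw [mul_left_comm, ← exp_add, neg_div, add_neg_cancel, exp_zero, mul_one]
    _ ≤ millsRatio x :=
        mul_le_mul_of_nonneg_left (le_integral_Iic_exp_neg_sq_div_two x) (exp_pos _).le

lemma tendsto_mul_millsRatio : Tendsto (fun x => x * millsRatio x) atTop (𝓝 1) := by
  have hlower : Tendsto (fun x : ℝ => 1 - (1 + x ^ 2)⁻¹) atTop (𝓝 1) := by
    simpa using tendsto_const_nhds.sub (tendsto_inv_atTop_zero.comp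
      (tendsto_atTop_add_const_left _ 1 (tendsto_pow_atTop (α := ℝ) two_ne_zero)))
  refine tendsto_of_tendsto_of_tendsto_of_le_of_le' hlower tendsto_const_nhds ?_ ?_
  · filter_upwards [eventually_ge_atTop 0] with x hx
    calc 1 - (1 + x ^ 2)⁻¹ = x * (x / (1 + x ^ 2)) := by field_simp; ring
      _ ≤ x * millsRatio x := mul_le_mul_of_nonneg_left (le_millsRatio x) hx
  · filter_upwards [eventually_gt_atTop 0] with x hx
    calc x * millsRatio x ≤ x * x⁻¹ := mul_le_mul_of_nonneg_left (millsRatio_le hx) hx.le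
      _ = 1 := mul_inv_cancel₀ hx.ne'

lemma tendsto_millsRatio_div_millsRatio {α : Type*} {l : Filter α} {a b : α → ℝ}
    (ha : Tendsto a l atTop) (hb : Tendsto b l atTop)
    (hab : Tendsto (fun i => b i / a i) l (𝓝 1)) :
    Tendsto (fun i => millsRatio (b i) / millsRatio (a i)) l (𝓝 1) := by
  have h := ((tendsto_mul_millsRatio.comp hb).div (tendsto_mul_millsRatio.comp ha)
    one_ne_zero).div hab one_ne_zero
  rw [div_one, div_one] at h
  refine h.congr' ?_
  filter_upwards [ha.eventually_gt_atTop 0, hb.eventually_gt_atTop 0] with i hai hbi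
  simp only [Pi.div_apply, Function.comp_apply]
  rw [mul_div_mul_comm, mul_div_cancel_left₀ _ (div_pos hbi hai).ne']

lemma Phi_neg_div_Phi_neg (a b : ℝ) :
    Phi (-b) / Phi (-a) = exp ((a ^ 2 - b ^ 2) / 2) * (millsRatio b / millsRatio a) := by
  rw [Phi_neg_eq, Phi_neg_eq, div_div_div_cancel_right₀ (by positivity), mul_div_mul_comm,
    ← exp_sub]
  ring_nf

theorem phi_ratio_tendsto_exp_general (ξ ν : ℕ → ℝ)
    (hξ : Tendsto ξ atTop atTop) (hν : Tendsto ν atTop (nhds 0))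
    (γ : ℝ) (hprod : Tendsto (fun n => ξ n * ν n) atTop (nhds γ)) :
    Tendsto (fun n => Phi (-Real.sqrt (ξ n) * (1 - ν n)) / Phi (-Real.sqrt (ξ n)))
      atTop (nhds (Real.exp γ)) := by
  have hν' : Tendsto (fun n => 1 - ν n) atTop (𝓝 1) := by
    simpa using tendsto_const_nhds.sub hν
  have ha : Tendsto (fun n => √(ξ n)) atTop atTop := tendsto_sqrt_atTop.comp hξ
  have hb : Tendsto (fun n => √(ξ n) * (1 - ν n)) atTop atTop := ha.atTop_mul_pos one_pos hν'
  have hratio : Tendsto (fun n => √(ξ n) * (1 - ν n) / √(ξ n)) atTop (𝓝 1) := by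
    refine hν'.congr' ?_
    filter_upwards [ha.eventually_gt_atTop 0] with n hn
    rw [mul_div_cancel_left₀ _ hn.ne']
  have hexponent :
      Tendsto (fun n => (√(ξ n) ^ 2 - (√(ξ n) * (1 - ν n)) ^ 2) / 2) atTop (𝓝 γ) := by
    have h := hprod.sub ((hprod.mul hν).div_const 2)
    rw [mul_zero, zero_div, sub_zero] at h
    refine h.congr' ?_
    filter_upwards [hξ.eventually_ge_atTop 0] with n hn
    rw [mul_pow, sq_sqrt hn]
    ring
  have h := ((continuous_exp.tendsto γ).comp hexponent).mul
    (tendsto_millsRatio_div_millsRatio ha hb hratio)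
  rw [mul_one] at h
  refine h.congr fun n => ?_
  rw [neg_mul, Phi_neg_div_Phi_neg]
  rfl

/-- Shao's Lemma 1 (finite-γ case): if `ξ_n → ∞`, `ν_n → 0` and `ξ_n ν_n → γ ∈ [0, ∞)`,
then `Φ(−√ξ_n (1 − ν_n)) / Φ(−√ξ_n) → e^γ`. -/
theorem phi_ratio_tendsto_exp (ξ ν : ℕ → ℝ) (hξpos : ∀ n, 0 < ξ n) (hνpos : ∀ n, 0 < ν n)
    (hξ : Tendsto ξ atTop atTop) (hν : Tendsto ν atTop (nhds 0))
    (γ : ℝ) (hγ : 0 ≤ γ) (hprod : Tendsto (fun n => ξ n * ν n) atTop (nhds γ)) :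
    Tendsto (fun n => Phi (-Real.sqrt (ξ n) * (1 - ν n)) / Phi (-Real.sqrt (ξ n)))
      atTop (nhds (Real.exp γ)) :=
  phi_ratio_tendsto_exp_general ξ ν hξ hν γ hprod
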